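/- Let H₁,…,H_K be complex channel matrices with rank(H_k) = L_k, let N₁,…,N_K be positive integers with N_k ≤ L_k and N = ∑_k N_k, and let 𝒾 > 0. Define recursively: Σ₁ = I, 𝒜_k = H_kᴴ Σ_k⁻¹ H_k with eigenvalue decomposition 𝒜_k = U_k Λ_k U_kᴴ (eigenvalues nonincreasing), T̃_k = U_{N_k,k} Γ_k^{1/2} S_k where Γ_k is the inverse water-filling loading for eigenvalues of 𝒜_k and per-user information 𝒾_k = (N_k/N)·𝒾 (using the first N_k modes if N_k ≤ r_k, and the first r_k modes padded with zeros if N_k > r_k), S_k any N_k×N_k unitary matrix, and Σ_{k+1} = Σ_k + H_k T̃_k T̃_kᴴ H_kᴴ. Then det(I + T̃_kᴴ 𝒜_k T̃_k) = 2^{(N_k/N)·𝒾} for every k, and consequently the sum mutual information constraint holds: log₂ det(I + ∑_{k=1}^{K} H_k T̃_k T̃_kᴴ H_kᴴ) = 𝒾. -/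

import Mathlib

open Matrix BigOperators
open scoped ComplexOrder

/-! Each precoder diagonalises its user's own channel: `T̃ₖᴴ 𝒜ₖ T̃ₖ` is unitarily similar to
`diag (γₙ λₙ)`, so `det (I + T̃ₖᴴ 𝒜ₖ T̃ₖ) = ∏ₙ (1 + γₙ λₙ)`. With the loading `γₙ = μ - 1/λₙ` on the
active modes every factor equals `μ λₙ`, and the water level `μ` is chosen so that
`μ ^ s ∏ₙ λₙ = 2 ^ 𝒾ₖ`; on the inactive modes (`γₙ = 0`) the factor is `1`.

Every `Σₖ` is positive definite, so the matrix determinant lemma gives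
`det Σₖ₊₁ = det Σₖ · det (I + T̃ₖᴴ 𝒜ₖ T̃ₖ)`, and the chain telescopes to
`det (I + ∑ₖ Hₖ T̃ₖ T̃ₖᴴ Hₖᴴ) = ∏ₖ 2 ^ 𝒾ₖ = 2 ^ 𝒾`. -/

open Finset

@[to_additive]
theorem Fin.apply_last_eq_mul_prod {M : Type*} [CommMonoid M] {n : ℕ} {f : Fin (n + 1) → M}
    {g : Fin n → M} (h : ∀ i, f i.succ = f i.castSucc * g i) :
    f (Fin.last n) = f 0 * ∏ i, g i := by
  induction n with
  | zero => simp
  | succ n ih =>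
    have := ih (f := fun i => f i.castSucc) fun i => h i.castSucc
    rw [Fin.prod_univ_castSucc, ← mul_assoc, ← Fin.succ_last, h, this, Fin.castSucc_zero]

/-- The inverse water-filling level `μ` over the first `s` modes, characterised by
`μ ^ s * ∏_{i<s} λᵢ = X`; mode `n` is loaded with `μ - λₙ⁻¹`. -/
noncomputable def waterLevel (lam : ℕ → ℝ) (X : ℝ) (s : ℕ) : ℝ :=
  (X / ∏ i ∈ range s, lam i) ^ ((1 : ℝ) / s)

section WaterFilling

variable {lam : ℕ → ℝ} {X : ℝ} {s : ℕ}

theorem waterLevel_pos (hX : 0 < X) (hP : 0 < ∏ i ∈ range s, lam i) : 0 < waterLevel lam X s :=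
  Real.rpow_pos_of_pos (div_pos hX hP) _

theorem inv_waterLevel (hX : 0 < X) (hP : 0 ≤ ∏ i ∈ range s, lam i) :
    (waterLevel lam X s)⁻¹ = ((∏ i ∈ range s, lam i) / X) ^ ((1 : ℝ) / s) := by
  rw [waterLevel, ← inv_div, Real.inv_rpow (div_nonneg hP hX.le), inv_inv]

theorem waterLevel_pow_mul_prod (hs : s ≠ 0) (hX : 0 ≤ X) (hP : 0 < ∏ i ∈ range s, lam i) :
    waterLevel lam X s ^ s * ∏ i ∈ range s, lam i = X := by
  rw [waterLevel, one_div, Real.rpow_inv_natCast_pow (div_nonneg hX hP.le) hs,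
    div_mul_cancel₀ _ hP.ne']

theorem prod_one_add_waterLevel_sub_inv_mul (hs : s ≠ 0) (hX : 0 ≤ X)
    (hlam : ∀ n < s, 0 < lam n) :
    ∏ n ∈ range s, (1 + (waterLevel lam X s - (lam n)⁻¹) * lam n) = X := by
  have hP : 0 < ∏ i ∈ range s, lam i := prod_pos fun i hi => hlam i (mem_range.1 hi)
  have hterm : ∀ n ∈ range s, 1 + (waterLevel lam X s - (lam n)⁻¹) * lam n =
      waterLevel lam X s * lam n := fun n hn => by
    field_simp [(hlam n (mem_range.1 hn)).ne']
    ring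
  rw [prod_congr rfl hterm, prod_mul_distrib, prod_const, card_range,
    waterLevel_pow_mul_prod hs hX hP]

theorem waterLevel_le_of_le {m r : ℕ} (hm : m ≠ 0) (hmr : m ≤ r) (hX : 0 < X)
    (hlam : ∀ n < r, 0 < lam n) (hactive : ∀ n < r, (waterLevel lam X r)⁻¹ ≤ lam n) :
    waterLevel lam X r ≤ waterLevel lam X m := by
  set μ := waterLevel lam X r
  have hPm : 0 < ∏ i ∈ range m, lam i :=
    prod_pos fun i hi => hlam i ((mem_range.1 hi).trans_le hmr)
  have hPr : 0 < ∏ i ∈ range r, lam i := prod_pos fun i hi => hlam i (mem_range.1 hi)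
  have hμ : 0 < μ := waterLevel_pos hX hPr
  have htail : 1 ≤ μ ^ (r - m) * ∏ i ∈ Ico m r, lam i := by
    rw [← Nat.card_Ico m r, ← prod_const, ← prod_mul_distrib]
    exact one_le_prod fun n hn => (inv_le_iff_one_le_mul₀' hμ).1 (hactive n (mem_Ico.1 hn).2)
  have hpow : μ ^ m * ∏ i ∈ range m, lam i ≤ waterLevel lam X m ^ m * ∏ i ∈ range m, lam i :=
    calc μ ^ m * ∏ i ∈ range m, lam i
        ≤ μ ^ m * (∏ i ∈ range m, lam i) * (μ ^ (r - m) * ∏ i ∈ Ico m r, lam i) :=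
          le_mul_of_one_le_right (by positivity) htail
      _ = μ ^ r * ∏ i ∈ range r, lam i := by
          rw [← prod_range_mul_prod_Ico _ hmr, ← pow_mul_pow_sub μ hmr]
          ring
      _ = X := waterLevel_pow_mul_prod (by omega) hX.le hPr
      _ = waterLevel lam X m ^ m * ∏ i ∈ range m, lam i :=
          (waterLevel_pow_mul_prod hm hX.le hPm).symm
  exact (pow_le_pow_iff_left₀ hμ.le (waterLevel_pos hX hPm).le hm).1
    (le_of_mul_le_mul_right hpow hPm)

theorem waterFilling_loading {m r : ℕ} {gam : ℕ → ℝ} (hm : m ≠ 0) (hr : r ≠ 0) (hX : 0 < X)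
    (hnonneg : ∀ n < r, 0 ≤ lam n)
    (hactive : ∀ n < r, ((∏ i ∈ range r, lam i) / X) ^ ((1 : ℝ) / r) < lam n)
    (hgam : ∀ n < m, gam n =
      if m ≤ r then waterLevel lam X m - (lam n)⁻¹
      else if n < r then waterLevel lam X r - (lam n)⁻¹ else 0) :
    (∀ n < m, 0 ≤ gam n) ∧ ∏ n ∈ range m, (1 + gam n * lam n) = X := by
  have hPr : 0 ≤ ∏ i ∈ range r, lam i := prod_nonneg fun i hi => hnonneg i (mem_range.1 hi)
  replace hactive : ∀ n < r, (waterLevel lam X r)⁻¹ < lam n := fun n hn =>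
    (inv_waterLevel hX hPr).trans_lt (hactive n hn)
  have hlam : ∀ n < r, 0 < lam n := fun n hn =>
    (inv_nonneg.2 (Real.rpow_nonneg (div_nonneg hX.le hPr) _)).trans_lt (hactive n hn)
  have hμr : 0 < waterLevel lam X r :=
    waterLevel_pos hX (prod_pos fun i hi => hlam i (mem_range.1 hi))
  have hgain : ∀ {μ : ℝ} {n : ℕ}, 0 < μ → μ⁻¹ ≤ lam n → 0 ≤ μ - (lam n)⁻¹ := fun hμ h =>
    sub_nonneg.2 (inv_le_of_inv_le₀ hμ h)
  by_cases hmr : m ≤ r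
  · simp only [hmr, if_true] at hgam
    have hμ : waterLevel lam X r ≤ waterLevel lam X m :=
      waterLevel_le_of_le hm hmr hX hlam fun n hn => (hactive n hn).le
    refine ⟨fun n hn => hgam n hn ▸ hgain (hμr.trans_le hμ) ?_, ?_⟩
    · exact (inv_anti₀ hμr hμ).trans (hactive n (hn.trans_le hmr)).le
    · rw [prod_congr rfl fun n hn => by rw [hgam n (mem_range.1 hn)]]
      exact prod_one_add_waterLevel_sub_inv_mul hm hX.le fun n hn => hlam n (hn.trans_le hmr)
  · rw [not_le] at hmr
    simp only [hmr.not_ge, if_false] at hgam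
    refine ⟨fun n hn => ?_, ?_⟩
    · rw [hgam n hn]
      split_ifs with hnr
      exacts [hgain hμr (hactive n hnr).le, le_rfl]
    · rw [← prod_range_mul_prod_Ico _ hmr.le,
        prod_congr rfl fun n hn => by
          rw [hgam n ((mem_range.1 hn).trans hmr), if_pos (mem_range.1 hn)],
        prod_one_add_waterLevel_sub_inv_mul hr hX.le hlam,
        prod_eq_one fun n hn => by
          rw [hgam n (mem_Ico.1 hn).2, if_neg (not_lt.2 (mem_Ico.1 hn).1), zero_mul, add_zero],
        mul_one]

end WaterFilling

namespace Matrix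

variable {m n R : Type*} [Fintype m] [DecidableEq m] [Fintype n] [DecidableEq n]
  [CommRing R] [StarRing R]

omit [Fintype n] in
theorem conjTranspose_submatrix_mul_conj_diagonal_mul_submatrix {U : Matrix m m R}
    (hU : U ∈ unitaryGroup m R) (d : m → R) {e : n → m} (he : Function.Injective e) :
    (U.submatrix id e)ᴴ * (U * diagonal d * Uᴴ) * U.submatrix id e = diagonal (d ∘ e) := by
  have hUU : Uᴴ * U = 1 := mem_unitaryGroup_iff'.mp hU
  rw [conjTranspose_submatrix, ← submatrix_id_id (U * diagonal d * Uᴴ),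
    ← submatrix_mul _ _ _ _ _ Function.bijective_id,
    ← submatrix_mul _ _ _ _ _ Function.bijective_id, ← Matrix.mul_assoc, ← Matrix.mul_assoc,
    hUU, Matrix.one_mul, Matrix.mul_assoc, hUU, Matrix.mul_one, submatrix_diagonal _ _ he]

theorem det_one_add_conjTranspose_mul_mul {S : Matrix n n R} (hS : S ∈ unitaryGroup n R)
    (B : Matrix n n R) : (1 + Sᴴ * B * S).det = (1 + B).det := by
  have hSS : S * Sᴴ = 1 := mem_unitaryGroup_iff.mp hS
  rw [det_one_add_mul_comm, ← Matrix.mul_assoc, hSS, Matrix.one_mul]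

theorem det_one_add_conjTranspose_mul_conj_diagonal_mul {U : Matrix m m ℂ}
    (hU : U ∈ unitaryGroup m ℂ) {S : Matrix n n ℂ} (hS : S ∈ unitaryGroup n ℂ)
    (lam : m → ℝ) {gam : n → ℝ} (hgam : ∀ i, 0 ≤ gam i) {e : n → m}
    (he : Function.Injective e) {T : Matrix m n ℂ}
    (hT : T = U.submatrix id e * diagonal (fun i => ((√(gam i) : ℝ) : ℂ)) * S) :
    (1 + Tᴴ * (U * diagonal (fun j => ((lam j : ℝ) : ℂ)) * Uᴴ) * T).det =
      ((∏ i, (1 + gam i * lam (e i)) : ℝ) : ℂ) := by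
  set D : Matrix n n ℂ := diagonal fun i => ((√(gam i) : ℝ) : ℂ)
  have hD : Dᴴ = D := by simp [D]
  have hDD : D * diagonal (fun i => ((lam (e i) : ℝ) : ℂ)) * D =
      diagonal fun i => ((gam i * lam (e i) : ℝ) : ℂ) := by
    simp only [D, diagonal_mul_diagonal]
    congr 1; ext i
    have hsq : ((√(gam i) : ℝ) : ℂ) ^ 2 = gam i := by exact_mod_cast Real.sq_sqrt (hgam i)
    push_cast
    linear_combination (lam (e i) : ℂ) * hsq
  calc (1 + Tᴴ * (U * diagonal (fun j => ((lam j : ℝ) : ℂ)) * Uᴴ) * T).det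
      = (1 + Sᴴ * (D * ((U.submatrix id e)ᴴ * (U * diagonal (fun j => ((lam j : ℝ) : ℂ)) * Uᴴ)
          * U.submatrix id e) * D) * S).det := by
        rw [hT, conjTranspose_mul, conjTranspose_mul, hD]
        simp only [Matrix.mul_assoc]
    _ = (diagonal fun i => ((1 + gam i * lam (e i) : ℝ) : ℂ)).det := by
        rw [det_one_add_conjTranspose_mul_mul hS, conjTranspose_submatrix_mul_conj_diagonal_mul_submatrix hU _ he,
          Function.comp_def, hDD, ← diagonal_one, diagonal_add]
        norm_cast
    _ = _ := by rw [det_diagonal, Complex.ofReal_prod]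

theorem det_one_add_sum_mul_conjTranspose {𝕜 p : Type*} [RCLike 𝕜] [Fintype p] [DecidableEq p]
    {K : ℕ} {q : Fin K → Type*} [∀ k, Fintype (q k)] [∀ k, DecidableEq (q k)]
    (G : ∀ k, Matrix p (q k) 𝕜) {Sig : Fin (K + 1) → Matrix p p 𝕜} (h0 : Sig 0 = 1)
    (hsucc : ∀ k, Sig k.succ = Sig k.castSucc + G k * (G k)ᴴ) :
    (1 + ∑ k, G k * (G k)ᴴ).det = ∏ k, (1 + (G k)ᴴ * (Sig k.castSucc)⁻¹ * G k).det := by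
  have hpd : ∀ i, (Sig i).PosDef := Fin.induction (h0 ▸ PosDef.one) fun k hk =>
    hsucc k ▸ hk.add_posSemidef (posSemidef_self_mul_conjTranspose _)
  have hstep : ∀ k, (Sig k.succ).det =
      (Sig k.castSucc).det * (1 + (G k)ᴴ * (Sig k.castSucc)⁻¹ * G k).det := fun k => by
    rw [hsucc k, det_add_mul _ _ ((hpd _).isUnit.map detMonoidHom)]
  rw [← h0, ← Fin.apply_last_eq_add_sum hsucc, Fin.apply_last_eq_mul_prod
    (f := fun i => (Sig i).det) hstep, h0, det_one, one_mul]

end Matrix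

theorem multiuser_transceiver_meets_sum_information_general {P K : ℕ}
    (Mdim N : Fin K → ℕ)
    (H : ∀ k : Fin K, Matrix (Fin P) (Fin (Mdim k)) ℂ)
    (hNpos' : ∀ k, 0 < N k) (hNM : ∀ k, N k ≤ Mdim k)
    (Ntot : ℕ) (hNtot : Ntot = ∑ k, N k) (hNpos : 0 < Ntot)
    (Info : ℝ)
    (Sig : Fin (K + 1) → Matrix (Fin P) (Fin P) ℂ)
    (hSig0 : Sig 0 = 1)
    (A : ∀ k : Fin K, Matrix (Fin (Mdim k)) (Fin (Mdim k)) ℂ)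
    (hA : ∀ k, A k = (H k)ᴴ * (Sig k.castSucc)⁻¹ * H k)
    (U : ∀ k : Fin K, Matrix (Fin (Mdim k)) (Fin (Mdim k)) ℂ)
    (hU : ∀ k, U k ∈ Matrix.unitaryGroup (Fin (Mdim k)) ℂ)
    (lam : Fin K → ℕ → ℝ)
    (hdecomp : ∀ k, A k =
      U k * Matrix.diagonal (fun i : Fin (Mdim k) => ((lam k i : ℝ) : ℂ)) * (U k)ᴴ)
    (hnonneg : ∀ k, ∀ n < Mdim k, 0 ≤ lam k n)
    (r : Fin K → ℕ)
    (hrpos : ∀ k, 0 < r k) (hrM : ∀ k, r k ≤ Mdim k)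
    (hactive : ∀ k, ∀ n < r k,
      ((∏ i ∈ Finset.range (r k), lam k i) / 2 ^ ((N k : ℝ) / Ntot * Info))
          ^ ((1 : ℝ) / (r k)) < lam k n)
    (gam : Fin K → ℕ → ℝ)
    (hgam : ∀ k, ∀ n < N k, gam k n =
      if N k ≤ r k then
        (2 ^ ((N k : ℝ) / Ntot * Info) / ∏ i ∈ Finset.range (N k), lam k i)
            ^ ((1 : ℝ) / (N k)) - (lam k n)⁻¹
      else if n < r k then
        (2 ^ ((N k : ℝ) / Ntot * Info) / ∏ i ∈ Finset.range (r k), lam k i)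
            ^ ((1 : ℝ) / (r k)) - (lam k n)⁻¹
      else 0)
    (S : ∀ k : Fin K, Matrix (Fin (N k)) (Fin (N k)) ℂ)
    (hS : ∀ k, S k ∈ Matrix.unitaryGroup (Fin (N k)) ℂ)
    (T : ∀ k : Fin K, Matrix (Fin (Mdim k)) (Fin (N k)) ℂ)
    (hT : ∀ k, T k = (U k).submatrix id (Fin.castLE (hNM k)) *
      Matrix.diagonal (fun n : Fin (N k) => ((Real.sqrt (gam k n) : ℝ) : ℂ)) * S k)
    (hSigS : ∀ k : Fin K,
      Sig k.succ = Sig k.castSucc + H k * T k * (T k)ᴴ * (H k)ᴴ) :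
    (∀ k, (1 + (T k)ᴴ * A k * T k).det =
        (((2 : ℝ) ^ ((N k : ℝ) / Ntot * Info) : ℝ) : ℂ)) ∧
    Real.logb 2 ((1 + ∑ k, H k * T k * (T k)ᴴ * (H k)ᴴ).det).re = Info := by
  have hdet : ∀ k, (1 + (T k)ᴴ * A k * T k).det =
      (((2 : ℝ) ^ ((N k : ℝ) / Ntot * Info) : ℝ) : ℂ) := by
    intro k
    obtain ⟨hγ, hprod⟩ := waterFilling_loading (hNpos' k).ne' (hrpos k).ne'
      (Real.rpow_pos_of_pos two_pos _) (fun n hn => hnonneg k n (hn.trans_le (hrM k)))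
      (hactive k) (hgam k)
    rw [hdecomp k, det_one_add_conjTranspose_mul_conj_diagonal_mul (hU k) (hS k) _
      (fun n => hγ n n.isLt) (Fin.castLE_injective _) (hT k), ← hprod,
      ← Fin.prod_univ_eq_prod_range (fun n => 1 + gam k n * lam k n)]
    rfl
  have hGram : ∀ k, H k * T k * (T k)ᴴ * (H k)ᴴ = (H k * T k) * (H k * T k)ᴴ := fun k => by
    simp only [conjTranspose_mul, Matrix.mul_assoc]
  have hA' : ∀ k, (T k)ᴴ * A k * T k = (H k * T k)ᴴ * (Sig k.castSucc)⁻¹ * (H k * T k) :=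
    fun k => by simp only [hA, conjTranspose_mul, Matrix.mul_assoc]
  have hshares : ∑ k, (N k : ℝ) / Ntot * Info = Info := by
    rw [← sum_mul, ← sum_div, ← Nat.cast_sum, ← hNtot, div_self (Nat.cast_ne_zero.2 hNpos.ne'),
      one_mul]
  refine ⟨hdet, ?_⟩
  rw [sum_congr rfl fun k _ => hGram k,
    det_one_add_sum_mul_conjTranspose _ hSig0 fun k => (hSigS k).trans (by rw [hGram]),
    prod_congr rfl fun k _ => by rw [← hA', hdet], ← Complex.ofReal_prod, Complex.ofReal_re,
    ← Real.rpow_sum_of_pos two_pos, hshares, Real.logb_rpow two_pos (by norm_num)]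

/-- Constraint satisfaction in the main theorem: with channels
`H k` of rank `L k`, subchannel counts `0 < N k ≤ L k`, `N = ∑ k, N k`, the recursively
built precoders `T̃ k = U_{N k, k} Γ_k^(1/2) S k` (where `Σ 0 = I`,
`𝒜 k = (H k)ᴴ (Σ k)⁻¹ (H k) = U_k Λ_k U_kᴴ`, `Γ_k` the inverse water-filling loading
for per-user information `𝒾_k = (N k / N) 𝒾`, and
`Σ (k+1) = Σ k + H k T̃ k (T̃ k)ᴴ (H k)ᴴ`) satisfy
`det (I + (T̃ k)ᴴ 𝒜_k (T̃ k)) = 2 ^ ((N k / N) 𝒾)` for every `k`, and hence the sum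
mutual information constraint `log₂ det (I + ∑ k, H k T̃ k (T̃ k)ᴴ (H k)ᴴ) = 𝒾`. -/
theorem multiuser_transceiver_meets_sum_information {P K : ℕ}
    (Mdim L N : Fin K → ℕ)
    (H : ∀ k : Fin K, Matrix (Fin P) (Fin (Mdim k)) ℂ)
    (hrank : ∀ k, (H k).rank = L k)
    (hNpos' : ∀ k, 0 < N k) (hNL : ∀ k, N k ≤ L k) (hNM : ∀ k, N k ≤ Mdim k)
    (Ntot : ℕ) (hNtot : Ntot = ∑ k, N k) (hNpos : 0 < Ntot)
    (Info : ℝ) (hI : 0 < Info)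
    (Sig : Fin (K + 1) → Matrix (Fin P) (Fin P) ℂ)
    (hSig0 : Sig 0 = 1)
    (A : ∀ k : Fin K, Matrix (Fin (Mdim k)) (Fin (Mdim k)) ℂ)
    (hA : ∀ k, A k = (H k)ᴴ * (Sig k.castSucc)⁻¹ * H k)
    (U : ∀ k : Fin K, Matrix (Fin (Mdim k)) (Fin (Mdim k)) ℂ)
    (hU : ∀ k, U k ∈ Matrix.unitaryGroup (Fin (Mdim k)) ℂ)
    (lam : Fin K → ℕ → ℝ)
    (hdecomp : ∀ k, A k =
      U k * Matrix.diagonal (fun i : Fin (Mdim k) => ((lam k i : ℝ) : ℂ)) * (U k)ᴴ)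
    (hmono : ∀ k, ∀ i j : ℕ, i ≤ j → j < Mdim k → lam k j ≤ lam k i)
    (hnonneg : ∀ k, ∀ n < Mdim k, 0 ≤ lam k n)
    (r : Fin K → ℕ)
    (hrpos : ∀ k, 0 < r k) (hrM : ∀ k, r k ≤ Mdim k)
    (hactive : ∀ k, ∀ n < r k,
      ((∏ i ∈ Finset.range (r k), lam k i) / 2 ^ ((N k : ℝ) / Ntot * Info))
          ^ ((1 : ℝ) / (r k)) < lam k n)
    (hmax : ∀ k, ∀ r', r k < r' → r' ≤ Mdim k →
      ¬ (∀ n < r',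
        ((∏ i ∈ Finset.range r', lam k i) / 2 ^ ((N k : ℝ) / Ntot * Info))
            ^ ((1 : ℝ) / r') < lam k n))
    (gam : Fin K → ℕ → ℝ)
    (hgam : ∀ k, ∀ n < N k, gam k n =
      if N k ≤ r k then
        (2 ^ ((N k : ℝ) / Ntot * Info) / ∏ i ∈ Finset.range (N k), lam k i)
            ^ ((1 : ℝ) / (N k)) - (lam k n)⁻¹
      else if n < r k then
        (2 ^ ((N k : ℝ) / Ntot * Info) / ∏ i ∈ Finset.range (r k), lam k i)
            ^ ((1 : ℝ) / (r k)) - (lam k n)⁻¹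
      else 0)
    (S : ∀ k : Fin K, Matrix (Fin (N k)) (Fin (N k)) ℂ)
    (hS : ∀ k, S k ∈ Matrix.unitaryGroup (Fin (N k)) ℂ)
    (T : ∀ k : Fin K, Matrix (Fin (Mdim k)) (Fin (N k)) ℂ)
    (hT : ∀ k, T k = (U k).submatrix id (Fin.castLE (hNM k)) *
      Matrix.diagonal (fun n : Fin (N k) => ((Real.sqrt (gam k n) : ℝ) : ℂ)) * S k)
    (hSigS : ∀ k : Fin K,
      Sig k.succ = Sig k.castSucc + H k * T k * (T k)ᴴ * (H k)ᴴ) :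
    (∀ k, (1 + (T k)ᴴ * A k * T k).det =
        (((2 : ℝ) ^ ((N k : ℝ) / Ntot * Info) : ℝ) : ℂ)) ∧
    Real.logb 2 ((1 + ∑ k, H k * T k * (T k)ᴴ * (H k)ᴴ).det).re = Info :=
  multiuser_transceiver_meets_sum_information_general Mdim N H hNpos' hNM Ntot hNtot hNpos Info Sig
    hSig0 A hA U hU lam hdecomp hnonneg r hrpos hrM hactive gam hgam S hS T hT hSigS
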